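/- With parameters ε = δ₀/8, θ = 3ε, β = 7ε, let h be continuous on X = GL_d(R) × P(R^d) with |h|_θ < ∞ and k'_{ε,β}(h) < ∞. Then for every t ∈ R, k'_{ε,β}(e^{itρ}h) ≤ 2|t|^ε |h|_θ + k'_{ε,β}(h), where ρ(g,ū) = log‖gu‖. -/

import Mathlib

open scoped LinearAlgebra.Projectivization RealInnerProductSpace ENNReal
open MeasureTheory

noncomputable section

abbrev E (d : ℕ) := EuclideanSpace ℝ (Fin d)
abbrev Gd (d : ℕ) := (E d →L[ℝ] E d)ˣ

/-- `N(g) = max(‖g‖, ‖g⁻¹‖)`. -/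
def Nnorm {d : ℕ} (g : Gd d) : ℝ :=
  max ‖(g : E d →L[ℝ] E d)‖ ‖((g⁻¹ : Gd d) : E d →L[ℝ] E d)‖

instance (d : ℕ) : TopologicalSpace (ℙ ℝ (E d)) := instTopologicalSpaceQuotient

/-- Angular distance between the directions of nonzero vectors `x, y`:
`d(x̄, ȳ) = ‖x ∧ y‖/(‖x‖‖y‖) = √(‖x‖²‖y‖² − ⟨x,y⟩²)/(‖x‖‖y‖)`. -/
def angDist {d : ℕ} (x y : E d) : ℝ :=
  Real.sqrt (‖x‖ ^ 2 * ‖y‖ ^ 2 - ⟪x, y⟫ ^ 2) / (‖x‖ * ‖y‖)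

/-- Angular distance on projective space, via representatives (it is
scale-invariant). -/
def dP {d : ℕ} (x y : ℙ ℝ (E d)) : ℝ := angDist x.rep y.rep

/-- The norm cocycle `ρ(g, v̄) = log (‖gv‖/‖v‖)`. -/
def ρ {d : ℕ} (g : Gd d) (x : ℙ ℝ (E d)) : ℝ :=
  Real.log (‖(g : E d →L[ℝ] E d) x.rep‖ / ‖x.rep‖)

/-- The weighted sup-seminorm `|h|_θ = sup_{(g,ū)} |h(g,ū)| / N(g)^θ`
(with values in `[0,∞]`). -/
def nθ {d : ℕ} (θ : ℝ) (h : Gd d → ℙ ℝ (E d) → ℂ) : ℝ≥0∞ :=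
  ⨆ (g : Gd d) (x : ℙ ℝ (E d)),
    ENNReal.ofReal (‖h g x‖ / Nnorm g ^ θ)

/-- The weighted Hölder seminorm in the projective variable:
`k_{ε,α}(h) = sup_{g, ū ≠ v̄} |h(g,ū)−h(g,v̄)| / (d(ū,v̄)^ε N(g)^α)`. -/
def kP {d : ℕ} (ε α : ℝ) (h : Gd d → ℙ ℝ (E d) → ℂ) : ℝ≥0∞ :=
  ⨆ (g : Gd d) (x : ℙ ℝ (E d)) (y : ℙ ℝ (E d)) (_ : x ≠ y),
    ENNReal.ofReal (‖h g x - h g y‖ / (dP x y ^ ε * Nnorm g ^ α))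

/-- The weighted Hölder seminorm in the matrix variable:
`k'_{ε,β}(h) = sup_{g ≠ g', ū} |h(g,ū)−h(g',ū)| / (‖g−g'‖^ε N(g)^β N(g')^β)`. -/
def kG {d : ℕ} (ε β : ℝ) (h : Gd d → ℙ ℝ (E d) → ℂ) : ℝ≥0∞ :=
  ⨆ (g : Gd d) (g' : Gd d) (_ : g ≠ g') (x : ℙ ℝ (E d)),
    ENNReal.ofReal (‖h g x - h g' x‖ /
      (‖(g : E d →L[ℝ] E d) - (g' : E d →L[ℝ] E d)‖ ^ ε * Nnorm g ^ β * Nnorm g' ^ β))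

/-- The Banach norm `‖h‖_B = |h|_θ + k_{ε,α}(h) + k'_{ε,β}(h)` (in `[0,∞]`). -/
def normB {d : ℕ} (θ ε α β : ℝ) (h : Gd d → ℙ ℝ (E d) → ℂ) : ℝ≥0∞ :=
  nθ θ h + kP ε α h + kG ε β h

/-! Split `e^{itρ(g)} h(g) - e^{itρ(g')} h(g') = (e^{itρ(g)} - e^{itρ(g')}) h(g)
+ e^{itρ(g')} (h(g) - h(g'))`; the second term is controlled by `k'_{ε,β}(h)`. For the first,
`|e^{ia} - e^{ib}| ≤ min(|a - b|, 2) ≤ 2 |a - b|^ε`, and `ρ(·, ū)` is Lipschitz: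
`|ρ(g, ū) - ρ(g', ū)| ≤ ‖g - g'‖ N(g) N(g')`. This gives `|h(g, ū)|` times
`2 |t|^ε ‖g - g'‖^ε N(g)^ε N(g')^ε`, and `N(g)^(θ + ε) N(g')^ε ≤ N(g)^β N(g')^β`. -/

theorem Real.abs_log_sub_log_le_div {a b c : ℝ} (hc : 0 < c) (ha : c ≤ a) (hb : c ≤ b) :
    |Real.log a - Real.log b| ≤ |a - b| / c := by
  wlog hba : b ≤ a generalizing a b
  · rw [abs_sub_comm, abs_sub_comm a]
    exact this hb ha (le_of_not_ge hba)
  have hb0 : 0 < b := hc.trans_le hb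
  rw [abs_of_nonneg (sub_nonneg.2 (Real.log_le_log hb0 hba)), abs_of_nonneg (sub_nonneg.2 hba)]
  calc Real.log a - Real.log b = Real.log (a / b) := (Real.log_div (by linarith) hb0.ne').symm
    _ ≤ a / b - 1 := Real.log_le_sub_one_of_pos (div_pos (hb0.trans_le hba) hb0)
    _ = (a - b) / b := by field_simp
    _ ≤ (a - b) / c := div_le_div_of_nonneg_left (by linarith) hc hb

theorem Complex.norm_exp_I_mul_ofReal_sub_le_rpow {ε : ℝ} (hε0 : 0 ≤ ε) (hε1 : ε ≤ 1) (a b : ℝ) :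
    ‖Complex.exp (Complex.I * a) - Complex.exp (Complex.I * b)‖ ≤ 2 * |a - b| ^ ε := by
  have hlip : ‖Complex.exp (Complex.I * a) - Complex.exp (Complex.I * b)‖ ≤ |a - b| := by
    rw [show Complex.exp (Complex.I * a) =
        Complex.exp (Complex.I * b) * Complex.exp (Complex.I * ↑(a - b)) by
      rw [← Complex.exp_add]; push_cast; ring_nf,
      ← mul_sub_one, norm_mul, Complex.norm_exp_I_mul_ofReal, one_mul]
    exact Real.norm_exp_I_mul_ofReal_sub_one_le
  have hbdd : ‖Complex.exp (Complex.I * a) - Complex.exp (Complex.I * b)‖ ≤ 2 := by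
    refine (norm_sub_le _ _).trans ?_
    rw [Complex.norm_exp_I_mul_ofReal, Complex.norm_exp_I_mul_ofReal]
    norm_num
  rcases le_total |a - b| 1 with hsmall | hlarge
  · have := Real.self_le_rpow_of_le_one (abs_nonneg (a - b)) hsmall hε1
    linarith [Real.rpow_nonneg (abs_nonneg (a - b)) ε]
  · linarith [Real.one_le_rpow hlarge hε0]

theorem one_le_max_norm_units_norm_inv {R : Type*} [NormedRing R] [NormOneClass R] [Nontrivial R]
    (u : Rˣ) : 1 ≤ max ‖(u : R)‖ ‖((u⁻¹ : Rˣ) : R)‖ := by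
  by_contra! hlt
  have hu : ‖(u : R)‖ < 1 := (le_max_left _ _).trans_lt hlt
  have hu' : ‖((u⁻¹ : Rˣ) : R)‖ < 1 := (le_max_right _ _).trans_lt hlt
  have := norm_mul_le (u : R) ((u⁻¹ : Rˣ) : R)
  rw [u.mul_inv, norm_one] at this
  linarith [mul_lt_one_of_nonneg_of_lt_one_left (norm_nonneg _) hu hu'.le]

theorem ContinuousLinearMap.norm_le_norm_units_inv_mul {𝕜 V : Type*} [NontriviallyNormedField 𝕜]
    [NormedAddCommGroup V] [NormedSpace 𝕜 V] (u : (V →L[𝕜] V)ˣ) (v : V) :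
    ‖v‖ ≤ ‖((u⁻¹ : (V →L[𝕜] V)ˣ) : V →L[𝕜] V)‖ * ‖(u : V →L[𝕜] V) v‖ := by
  have hv : ((u⁻¹ : (V →L[𝕜] V)ˣ) : V →L[𝕜] V) ((u : V →L[𝕜] V) v) = v := by
    change ((((u⁻¹ : (V →L[𝕜] V)ˣ) : V →L[𝕜] V) * u : V →L[𝕜] V)) v = v
    rw [u.inv_mul]
    rfl
  simpa only [hv] using ((u⁻¹ : (V →L[𝕜] V)ˣ) : V →L[𝕜] V).le_opNorm ((u : V →L[𝕜] V) v)

section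

variable {d : ℕ}

theorem one_le_Nnorm [Nontrivial (E d)] (g : Gd d) : 1 ≤ Nnorm g :=
  one_le_max_norm_units_norm_inv g

theorem inv_Nnorm_le_norm_apply_div (g : Gd d) {v : E d} (hv : v ≠ 0) :
    (Nnorm g)⁻¹ ≤ ‖(g : E d →L[ℝ] E d) v‖ / ‖v‖ := by
  have : Nontrivial (E d) := ⟨⟨v, 0, hv⟩⟩
  have hN : 0 < Nnorm g := one_pos.trans_le (one_le_Nnorm g)
  rw [inv_le_iff_one_le_mul₀ hN, div_mul_eq_mul_div, le_div_iff₀ (norm_pos_iff.2 hv), one_mul,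
    mul_comm]
  calc ‖v‖ ≤ ‖((g⁻¹ : Gd d) : E d →L[ℝ] E d)‖ * ‖(g : E d →L[ℝ] E d) v‖ :=
        ContinuousLinearMap.norm_le_norm_units_inv_mul g v
    _ ≤ Nnorm g * ‖(g : E d →L[ℝ] E d) v‖ := by gcongr; exact le_max_right _ _

theorem abs_ρ_sub_ρ_le (g g' : Gd d) (x : ℙ ℝ (E d)) :
    |ρ g x - ρ g' x|
      ≤ ‖(g : E d →L[ℝ] E d) - (g' : E d →L[ℝ] E d)‖ * (Nnorm g * Nnorm g') := by
  have : Nontrivial (E d) := ⟨⟨x.rep, 0, x.rep_nonzero⟩⟩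
  have hN := one_le_Nnorm g
  have hN' := one_le_Nnorm g'
  have hr : 0 < ‖x.rep‖ := norm_pos_iff.2 x.rep_nonzero
  have hc : (Nnorm g * Nnorm g')⁻¹ ≤ (Nnorm g)⁻¹ ⊓ (Nnorm g')⁻¹ := by
    rw [mul_inv]
    exact le_inf (mul_le_of_le_one_right (by positivity) (inv_le_one_of_one_le₀ hN'))
      (mul_le_of_le_one_left (by positivity) (inv_le_one_of_one_le₀ hN))
  have hdiff : |‖(g : E d →L[ℝ] E d) x.rep‖ / ‖x.rep‖ - ‖(g' : E d →L[ℝ] E d) x.rep‖ / ‖x.rep‖|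
      ≤ ‖(g : E d →L[ℝ] E d) - (g' : E d →L[ℝ] E d)‖ := by
    rw [← sub_div, abs_div, abs_of_pos hr, div_le_iff₀ hr]
    refine (abs_norm_sub_norm_le _ _).trans ?_
    rw [← sub_apply]
    exact ContinuousLinearMap.le_opNorm _ _
  calc |ρ g x - ρ g' x|
      ≤ |‖(g : E d →L[ℝ] E d) x.rep‖ / ‖x.rep‖ - ‖(g' : E d →L[ℝ] E d) x.rep‖ / ‖x.rep‖|
          / (Nnorm g * Nnorm g')⁻¹ :=
        Real.abs_log_sub_log_le_div (by positivity)
          (hc.trans inf_le_left |>.trans (inv_Nnorm_le_norm_apply_div g x.rep_nonzero))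
          (hc.trans inf_le_right |>.trans (inv_Nnorm_le_norm_apply_div g' x.rep_nonzero))
    _ ≤ ‖(g : E d →L[ℝ] E d) - (g' : E d →L[ℝ] E d)‖ * (Nnorm g * Nnorm g') := by
        rw [div_inv_eq_mul]; gcongr

def kGWeight (ε β : ℝ) (g g' : Gd d) : ℝ :=
  ‖(g : E d →L[ℝ] E d) - (g' : E d →L[ℝ] E d)‖ ^ ε * Nnorm g ^ β * Nnorm g' ^ β

theorem ofReal_norm_div_le_nθ (θ : ℝ) (h : Gd d → ℙ ℝ (E d) → ℂ) (g : Gd d) (x : ℙ ℝ (E d)) :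
    ENNReal.ofReal (‖h g x‖ / Nnorm g ^ θ) ≤ nθ θ h :=
  le_iSup₂_of_le g x le_rfl

theorem ofReal_norm_sub_div_le_kG (ε β : ℝ) (h : Gd d → ℙ ℝ (E d) → ℂ) {g g' : Gd d}
    (hne : g ≠ g') (x : ℙ ℝ (E d)) :
    ENNReal.ofReal (‖h g x - h g' x‖ / kGWeight ε β g g') ≤ kG ε β h :=
  le_iSup₂_of_le g g' <| le_iSup₂_of_le hne x le_rfl

theorem kGWeight_pos [Nontrivial (E d)] {ε β : ℝ} {g g' : Gd d} (hne : g ≠ g') :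
    0 < kGWeight ε β g g' := by
  have hΔ : 0 < ‖(g : E d →L[ℝ] E d) - (g' : E d →L[ℝ] E d)‖ :=
    norm_pos_iff.2 (sub_ne_zero.2 fun hgg' => hne (Units.ext hgg'))
  have hN := one_le_Nnorm g
  have hN' := one_le_Nnorm g'
  rw [kGWeight]
  positivity

theorem norm_exp_I_mul_ρ_sub_le {ε : ℝ} (hε0 : 0 ≤ ε) (hε1 : ε ≤ 1) (t : ℝ) (g g' : Gd d)
    (x : ℙ ℝ (E d)) :
    ‖Complex.exp (Complex.I * (t * ρ g x)) - Complex.exp (Complex.I * (t * ρ g' x))‖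
      ≤ 2 * |t| ^ ε * kGWeight ε ε g g' := by
  have : Nontrivial (E d) := ⟨⟨x.rep, 0, x.rep_nonzero⟩⟩
  have hN := one_le_Nnorm g
  have hN' := one_le_Nnorm g'
  have hphase : |t * ρ g x - t * ρ g' x|
      ≤ |t| * (‖(g : E d →L[ℝ] E d) - (g' : E d →L[ℝ] E d)‖ * (Nnorm g * Nnorm g')) := by
    rw [← mul_sub, abs_mul]
    exact mul_le_mul_of_nonneg_left (abs_ρ_sub_ρ_le g g' x) (abs_nonneg t)
  push_cast [← Complex.ofReal_mul]
  calc _ ≤ 2 * |t * ρ g x - t * ρ g' x| ^ ε :=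
        Complex.norm_exp_I_mul_ofReal_sub_le_rpow hε0 hε1 _ _
    _ ≤ 2 * (|t| * (‖(g : E d →L[ℝ] E d) - (g' : E d →L[ℝ] E d)‖ * (Nnorm g * Nnorm g'))) ^ ε := by
        gcongr
    _ = _ := by
        rw [kGWeight, Real.mul_rpow (by positivity) (by positivity), Real.mul_rpow (by positivity)
          (by positivity), Real.mul_rpow (by positivity) (by positivity)]
        ring

theorem rpow_mul_kGWeight_le [Nontrivial (E d)] {ε θ β : ℝ} (hθβ : θ + ε ≤ β) (hεβ : ε ≤ β)
    (g g' : Gd d) :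
    Nnorm g ^ θ * kGWeight ε ε g g' ≤ kGWeight ε β g g' := by
  have hN := one_le_Nnorm g
  have hN' := one_le_Nnorm g'
  have hg : Nnorm g ^ θ * Nnorm g ^ ε ≤ Nnorm g ^ β := by
    rw [← Real.rpow_add (by positivity)]
    exact Real.rpow_le_rpow_of_exponent_le hN hθβ
  have hg' : Nnorm g' ^ ε ≤ Nnorm g' ^ β := Real.rpow_le_rpow_of_exponent_le hN' hεβ
  calc _ = ‖(g : E d →L[ℝ] E d) - (g' : E d →L[ℝ] E d)‖ ^ ε
        * (Nnorm g ^ θ * Nnorm g ^ ε) * Nnorm g' ^ ε := by rw [kGWeight]; ring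
    _ ≤ _ := by rw [kGWeight]; gcongr

theorem norm_exp_mul_sub_div_kGWeight_le {ε θ β : ℝ} (hε0 : 0 ≤ ε) (hε1 : ε ≤ 1)
    (hθβ : θ + ε ≤ β) (hεβ : ε ≤ β) (h : Gd d → ℙ ℝ (E d) → ℂ) (t : ℝ) {g g' : Gd d}
    (hne : g ≠ g') (x : ℙ ℝ (E d)) :
    ‖Complex.exp (Complex.I * (t * ρ g x)) * h g x
        - Complex.exp (Complex.I * (t * ρ g' x)) * h g' x‖ / kGWeight ε β g g'
      ≤ 2 * |t| ^ ε * (‖h g x‖ / Nnorm g ^ θ) + ‖h g x - h g' x‖ / kGWeight ε β g g' := by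
  have : Nontrivial (E d) := ⟨⟨x.rep, 0, x.rep_nonzero⟩⟩
  have hW := kGWeight_pos (ε := ε) (β := β) hne
  have hNθ : 0 < Nnorm g ^ θ := Real.rpow_pos_of_pos (one_pos.trans_le (one_le_Nnorm g)) θ
  have hu' : ‖Complex.exp (Complex.I * (t * ρ g' x))‖ = 1 := by
    push_cast [← Complex.ofReal_mul]
    exact Complex.norm_exp_I_mul_ofReal _
  set u := Complex.exp (Complex.I * (t * ρ g x))
  set u' := Complex.exp (Complex.I * (t * ρ g' x))
  have hsplit : ‖u * h g x - u' * h g' x‖ ≤ ‖u - u'‖ * ‖h g x‖ + ‖h g x - h g' x‖ := by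
    calc _ = ‖(u - u') * h g x + u' * (h g x - h g' x)‖ := by ring_nf
      _ ≤ _ := by
        rw [← one_mul ‖h g x - h g' x‖, ← hu', ← norm_mul, ← norm_mul]
        exact norm_add_le _ _
  rw [div_le_iff₀ hW, add_mul, div_mul_cancel₀ _ hW.ne']
  calc _ ≤ ‖u - u'‖ * ‖h g x‖ + ‖h g x - h g' x‖ := hsplit
    _ ≤ 2 * |t| ^ ε * kGWeight ε ε g g' * ‖h g x‖ + ‖h g x - h g' x‖ := by
        gcongr; exact norm_exp_I_mul_ρ_sub_le hε0 hε1 t g g' x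
    _ = 2 * |t| ^ ε * (‖h g x‖ / Nnorm g ^ θ) * (Nnorm g ^ θ * kGWeight ε ε g g')
          + ‖h g x - h g' x‖ := by field_simp
    _ ≤ _ := by gcongr; exact rpow_mul_kGWeight_le hθβ hεβ g g'

theorem kG_exp_mul_le {ε θ β : ℝ} (hε0 : 0 ≤ ε) (hε1 : ε ≤ 1) (hθβ : θ + ε ≤ β) (hεβ : ε ≤ β)
    (h : Gd d → ℙ ℝ (E d) → ℂ) (t : ℝ) :
    kG ε β (fun g x => Complex.exp (Complex.I * (t * ρ g x)) * h g x)
      ≤ ENNReal.ofReal (2 * |t| ^ ε) * nθ θ h + kG ε β h := by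
  refine iSup₂_le fun g g' => iSup₂_le fun hne x => ?_
  calc _ ≤ ENNReal.ofReal (2 * |t| ^ ε * (‖h g x‖ / Nnorm g ^ θ)
          + ‖h g x - h g' x‖ / kGWeight ε β g g') :=
        ENNReal.ofReal_le_ofReal (norm_exp_mul_sub_div_kGWeight_le hε0 hε1 hθβ hεβ h t hne x)
    _ ≤ ENNReal.ofReal (2 * |t| ^ ε) * ENNReal.ofReal (‖h g x‖ / Nnorm g ^ θ)
          + ENNReal.ofReal (‖h g x - h g' x‖ / kGWeight ε β g g') := by
        rw [← ENNReal.ofReal_mul (by positivity)]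
        exact ENNReal.ofReal_add_le
    _ ≤ _ := by
        gcongr
        exacts [ofReal_norm_div_le_nθ θ h g x, ofReal_norm_sub_div_le_kG ε β h hne x]

end

theorem kG_exp_smul_le_general
    {d : ℕ} (δ₀ ε θ β : ℝ) (hδ₀ : 0 < δ₀) (hδ₀' : δ₀ ≤ 8 / 3)
    (hε : ε = δ₀ / 8) (hθ : θ = 3 * ε) (hβ : β = 7 * ε)
    (h : Gd d → ℙ ℝ (E d) → ℂ) (t : ℝ) :
    kG ε β (fun g x => Complex.exp (Complex.I * (t * ρ g x)) * h g x)
      ≤ ENNReal.ofReal (2 * |t| ^ ε) * nθ θ h + kG ε β h :=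
  kG_exp_mul_le (by linarith) (by linarith) (by linarith) (by linarith) h t

/-- With parameters `ε = δ₀/8`, `θ = 3ε`, `β = 7ε` (as in the paper we may assume
`δ₀ ≤ 8/3` without loss of generality), if `h` is continuous with `|h|_θ < ∞` and
`k'_{ε,β}(h) < ∞`, then for every `t ∈ ℝ`,
`k'_{ε,β}(e^{itρ} h) ≤ 2|t|^ε |h|_θ + k'_{ε,β}(h)`. -/
theorem kG_exp_smul_le
    {d : ℕ} (δ₀ ε θ β : ℝ) (hδ₀ : 0 < δ₀) (hδ₀' : δ₀ ≤ 8 / 3)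
    (hε : ε = δ₀ / 8) (hθ : θ = 3 * ε) (hβ : β = 7 * ε)
    (h : Gd d → ℙ ℝ (E d) → ℂ)
    (hcont : Continuous fun p : Gd d × ℙ ℝ (E d) => h p.1 p.2)
    (hθfin : nθ θ h ≠ ⊤) (hkfin : kG ε β h ≠ ⊤) (t : ℝ) :
    kG ε β (fun g x => Complex.exp (Complex.I * (t * ρ g x)) * h g x)
      ≤ ENNReal.ofReal (2 * |t| ^ ε) * nθ θ h + kG ε β h :=
  kG_exp_smul_le_general δ₀ ε θ β hδ₀ hδ₀' hε hθ hβ h t
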